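/- arXiv:2306.11940 — 3 statements merged into one kernel-verified Lean document; each statement's English description precedes it below -/
import Mathlib

section
/- Let d and k be positive integers and let p be a prime. If p divides o_d(k)/k (which is an integer since k divides o_d(k)), then p divides d. -/
open scoped DirectSum

noncomputable section

/-- `o_d(k)`: the gcd, taken as a nonnegative integer, of the set
`{u ^ d - 1 | u ≡ 1 (mod k)}`, realized as the nonnegative generator of the ideal of `ℤ`
spanned by this set. -/
def oo (d k : ℕ) : ℕ :=
  (Submodule.IsPrincipal.generator
    (Ideal.span {z : ℤ | ∃ u : ℤ, (k : ℤ) ∣ (u - 1) ∧ z = u ^ d - 1})).natAbs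

/-! Since `k ∣ o_d(k)`, the hypothesis says `k p ∣ o_d(k)`. If `p ∣ k`, test this on
`u = 1 + k`: as `(1 + k) ^ d ≡ 1 + d k (mod k²)` and `k p ∣ k²`, it forces `p ∣ d`.
If `p ∤ k`, some `u ≡ 1 (mod k)` is a multiple of `p`, so `p` divides both `u ^ d` and
`u ^ d - 1`, which is impossible unless `d = 0`. -/

theorem dvd_of_mul_dvd_one_add_pow_sub_one {R : Type*} [CommRing R] [IsDomain R] {k p : R}
    {d : ℕ} (hk : k ≠ 0) (hpk : p ∣ k) (h : k * p ∣ (1 + k) ^ d - 1) : p ∣ d := by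
  have hsq : k * p ∣ (1 + k) ^ d - k * d - 1 := by
    refine (mul_dvd_mul_left k hpk).trans ?_
    simpa [sq] using sq_dvd_add_pow_sub_sub k 1 d
  have hkd : k * p ∣ k * d := by simpa using h.sub hsq
  exact (mul_dvd_mul_iff_left hk).mp hkd

theorem IsCoprime.exists_dvd_and_dvd_sub_one {R : Type*} [CommRing R] {p k : R}
    (h : IsCoprime p k) : ∃ u : R, p ∣ u ∧ k ∣ u - 1 := by
  obtain ⟨x, y, hxy⟩ := h
  exact ⟨x * p, dvd_mul_left p x, ⟨-y, by linear_combination hxy⟩⟩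

theorem dvd_oo (d k : ℕ) : k ∣ oo d k := by
  have hle : Ideal.span {z : ℤ | ∃ u : ℤ, (k : ℤ) ∣ (u - 1) ∧ z = u ^ d - 1} ≤
      Ideal.span {(k : ℤ)} := by
    rw [Ideal.span_le]
    rintro _ ⟨u, hu, rfl⟩
    exact Ideal.mem_span_singleton.mpr <| hu.trans <| by simpa using sub_dvd_pow_sub_pow u 1 d
  exact Int.natAbs_dvd_natAbs.mpr <| Ideal.mem_span_singleton.mp <|
    hle (Submodule.IsPrincipal.generator_mem _)

section

variable {d k : ℕ}

theorem oo_dvd_pow_sub_one {u : ℤ} (hu : (k : ℤ) ∣ u - 1) : (oo d k : ℤ) ∣ u ^ d - 1 :=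
  Int.natAbs_dvd.mpr <| (Submodule.IsPrincipal.mem_iff_generator_dvd _).mp <|
    Ideal.subset_span ⟨u, hu, rfl⟩

theorem dvd_of_mul_dvd_oo {p : ℕ} (hk : 0 < k) (hpk : p ∣ k) (h : k * p ∣ oo d k) :
    p ∣ d := by
  have hu : (k : ℤ) ∣ (1 + k) - 1 := by simp
  have hkp : ((k * p : ℕ) : ℤ) ∣ (1 + k) ^ d - 1 :=
    (Int.natCast_dvd_natCast.mpr h).trans (oo_dvd_pow_sub_one hu)
  push_cast at hkp
  exact_mod_cast dvd_of_mul_dvd_one_add_pow_sub_one (by exact_mod_cast hk.ne')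
    (Int.natCast_dvd_natCast.mpr hpk) hkp

theorem eq_zero_of_prime_dvd_oo {p : ℕ} (hp : p.Prime) (hpk : ¬ p ∣ k) (h : p ∣ oo d k) :
    d = 0 := by
  have hcop : IsCoprime (p : ℤ) k :=
    Int.isCoprime_iff_gcd_eq_one.mpr <| by exact_mod_cast hp.coprime_iff_not_dvd.mpr hpk
  obtain ⟨u, hpu, hu⟩ := hcop.exists_dvd_and_dvd_sub_one
  by_contra hd
  have hp1 : (p : ℤ) ∣ 1 := by
    have hpg : (p : ℤ) ∣ u ^ d - 1 :=
      (Int.natCast_dvd_natCast.mpr h).trans (oo_dvd_pow_sub_one hu)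
    simpa using (dvd_pow hpu hd).sub hpg
  exact hp.not_dvd_one (by exact_mod_cast hp1)

end

theorem stmt8_general (d k p : ℕ) (hk : 0 < k) (hp : p.Prime)
    (h : p ∣ oo d k / k) : p ∣ d := by
  have hkp : k * p ∣ oo d k := Nat.mul_dvd_of_dvd_div (dvd_oo d k) h
  by_cases hpk : p ∣ k
  · exact dvd_of_mul_dvd_oo hk hpk hkp
  · rw [eq_zero_of_prime_dvd_oo hp hpk (dvd_of_mul_left_dvd hkp)]
    exact dvd_zero p

theorem stmt8 (d k p : ℕ) (hd : 0 < d) (hk : 0 < k) (hp : p.Prime)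
    (h : p ∣ oo d k / k) : p ∣ d :=
  stmt8_general d k p hk hp h

end
end

section
/- Let d, k, k' be positive integers with gcd(k, k') = 1. Then o_d(k·k') ≤ o_d(k)·o_d(k'). -/
/-!
A prime power `p ^ a` dividing `o_d(k k')` is coprime to `k'` or to `k`; say to `k'`. Given
`u ≡ 1 (mod k)`, the Chinese remainder theorem gives `w` with `w ≡ u (mod k p ^ a)` and
`w ≡ 1 (mod k')`. Then `p ^ a ∣ w ^ d - 1` since `w ≡ 1 (mod k k')`, and
`p ^ a ∣ w ^ d - u ^ d`, so `p ^ a ∣ u ^ d - 1`. Hence `p ^ a ∣ o_d(k)`, and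
`o_d(k k') ∣ o_d(k) o_d(k')`, which is positive.
-/

noncomputable section

theorem IsCoprime.exists_dvd_sub_and_dvd_sub {R : Type*} [CommRing R] {m n : R}
    (h : IsCoprime m n) (a b : R) : ∃ w, m ∣ w - a ∧ n ∣ w - b := by
  obtain ⟨x, y, hxy⟩ := h
  exact ⟨a * y * n + b * x * m, ⟨(b - a) * x, by linear_combination a * hxy⟩,
    ⟨(a - b) * y, by linear_combination b * hxy⟩⟩

theorem dvd_oo_iff {d k : ℕ} {m : ℤ} :
    m ∣ oo d k ↔ ∀ u : ℤ, (k : ℤ) ∣ u - 1 → m ∣ u ^ d - 1 := by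
  rw [oo, Int.natCast_natAbs, dvd_abs, ← Ideal.mem_span_singleton,
    ← Ideal.span_singleton_le_iff_mem, Ideal.span_singleton_generator, Ideal.span_le]
  constructor
  · intro hS u hu
    exact Ideal.mem_span_singleton.mp (hS ⟨u, hu, rfl⟩)
  · rintro hS _ ⟨u, hu, rfl⟩
    exact Ideal.mem_span_singleton.mpr (hS u hu)

theorem oo_pos {d k : ℕ} (hd : 0 < d) (hk : 0 < k) : 0 < oo d k := by
  have hdvd : (oo d k : ℤ) ∣ ((k : ℤ) + 1) ^ d - 1 := dvd_oo_iff.mp dvd_rfl _ (by simp)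
  have hne : ((k : ℤ) + 1) ^ d - 1 ≠ 0 := by
    have : (1 : ℤ) < ((k : ℤ) + 1) ^ d := one_lt_pow₀ (by omega) hd.ne'
    omega
  exact Nat.pos_of_ne_zero (by exact_mod_cast ne_zero_of_dvd_ne_zero hne hdvd)

theorem dvd_oo_of_dvd_oo_mul {d k k' M : ℕ} (hkk' : Nat.Coprime k k') (hM : Nat.Coprime M k')
    (hMg : M ∣ oo d (k * k')) : M ∣ oo d k := by
  have hMg : (M : ℤ) ∣ oo d (k * k') := Int.natCast_dvd_natCast.mpr hMg
  rw [← Int.natCast_dvd_natCast, dvd_oo_iff]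
  intro u hu
  have hco : IsCoprime ((k : ℤ) * M) k' := Nat.isCoprime_iff_coprime.mpr (hkk'.mul_left hM)
  obtain ⟨w, hwu, hw1⟩ := hco.exists_dvd_sub_and_dvd_sub u 1
  have hk_w1 : (k : ℤ) ∣ w - 1 := by
    simpa only [sub_add_sub_cancel] using dvd_add ((dvd_mul_right _ _).trans hwu) hu
  have hkk'_w1 : ((k * k' : ℕ) : ℤ) ∣ w - 1 := by
    push_cast
    exact (Nat.isCoprime_iff_coprime.mpr hkk').mul_dvd hk_w1 hw1
  have h₁ : (M : ℤ) ∣ w ^ d - 1 := dvd_oo_iff.mp hMg w hkk'_w1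
  have h₂ : (M : ℤ) ∣ w ^ d - u ^ d :=
    ((dvd_mul_left _ _).trans hwu).trans (sub_dvd_pow_sub_pow w u d)
  simpa only [sub_sub_sub_cancel_left] using dvd_sub h₁ h₂

theorem oo_mul_dvd_mul {d k k' : ℕ} (h : Nat.Coprime k k') :
    oo d (k * k') ∣ oo d k * oo d k' := by
  rw [Nat.dvd_iff_prime_pow_dvd_dvd]
  intro p a hp hpa
  by_cases hpk' : p ∣ k'
  · have hpk : ¬ p ∣ k := fun hpk => hp.not_dvd_one (h ▸ Nat.dvd_gcd hpk hpk')
    have hpa' : p ^ a ∣ oo d (k' * k) := mul_comm k k' ▸ hpa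
    exact (dvd_oo_of_dvd_oo_mul h.symm
      ((hp.coprime_iff_not_dvd.mpr hpk).pow_left a) hpa').mul_left _
  · exact (dvd_oo_of_dvd_oo_mul h
      ((hp.coprime_iff_not_dvd.mpr hpk').pow_left a) hpa).mul_right _

theorem stmt11 (d k k' : ℕ) (hd : 0 < d) (hk : 0 < k) (hk' : 0 < k')
    (h : Nat.Coprime k k') : oo d (k * k') ≤ oo d k * oo d k' :=
  Nat.le_of_dvd (Nat.mul_pos (oo_pos hd hk) (oo_pos hd hk')) (oo_mul_dvd_mul h)

end
end

section
/- Let G be a finite abelian group. Then there is an isomorphism of abelian groups Hmg^1(G, ℚ/ℤ) ≅ ⊕_C Hom(C, ℚ/ℤ), where the direct sum runs over all cyclic subgroups C of G and Hom(C, ℚ/ℤ) denotes the group of homomorphisms from C to ℚ/ℤ (the Pontryagin dual of C). -/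
open scoped DirectSum

noncomputable section

/-- `ℚ/ℤ`, the quotient of the rationals by the integers. -/
abbrev QZ : Type := AddCircle (1 : ℚ)

/-- The group of homogeneous functions of degree `d` from `G` to `H`, i.e. functions `f` with
`f (n • x) = n ^ d • f x` for every `x : G` and every integer `n` coprime to the order of `x`,
as an additive subgroup of `G → H` under pointwise addition. -/
def Hmg (d : ℕ) (G H : Type*) [AddCommGroup G] [AddCommGroup H] : AddSubgroup (G → H) where
  carrier := {f | ∀ (x : G) (n : ℤ), IsCoprime n (addOrderOf x : ℤ) → f (n • x) = n ^ d • f x}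
  zero_mem' := by intro x n _; simp
  add_mem' := by
    intro f g hf hg x n h
    simp only [Pi.add_apply, hf x n h, hg x n h, smul_add]
  neg_mem' := by
    intro f hf x n h
    simp only [Pi.neg_apply, hf x n h, smul_neg]
/-! On a cyclic subgroup `C = ⟨g⟩` the generators are exactly the `n • g` with `n` coprime to the
order of `g`, and the order of `f g` divides that of `g` (apply homogeneity with `n = ord g + 1`).
Hence a homogeneous `f` restricts on `C` to the homomorphism `n • g ↦ n • f g`, which agrees with
`f` on the generators of `C`; conversely a family `(φ_C)` yields the homogeneous function
`x ↦ φ_⟨x⟩ x`. Since every `x` generates exactly one cyclic subgroup, these are inverse. For finite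
`G` there are finitely many cyclic subgroups, so the product is the direct sum. -/

section

open AddSubgroup

variable {G A : Type*} [AddCommGroup G] [AddCommGroup A]

theorem AddSubgroup.zmultiples_zsmul_eq_iff_isCoprime {x : G} {n : ℤ} :
    zmultiples (n • x) = zmultiples x ↔ IsCoprime n (addOrderOf x) := by
  constructor
  · intro h
    obtain ⟨k, hk⟩ := mem_zmultiples_iff.mp (h ▸ mem_zmultiples x)
    obtain ⟨t, ht⟩ : (addOrderOf x : ℤ) ∣ k * n - 1 := by
      rw [addOrderOf_dvd_iff_zsmul_eq_zero, sub_zsmul, mul_zsmul, hk, one_zsmul, add_neg_cancel]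
    exact ⟨k, -t, by linear_combination ht⟩
  · rintro ⟨a, b, hab⟩
    refine le_antisymm (zmultiples_le_of_mem (zsmul_mem (mem_zmultiples x) n))
      (zmultiples_le_of_mem (mem_zmultiples_iff.mpr ⟨a, ?_⟩))
    calc a • n • x = (a * n + b * addOrderOf x) • x := by
          rw [add_zsmul, mul_zsmul, mul_zsmul, natCast_zsmul, addOrderOf_nsmul_eq_zero,
            smul_zero, add_zero]
      _ = x := by rw [hab, one_zsmul]

theorem AddSubgroup.zmultiples_coe_eq_iff {H : AddSubgroup G} (g : H) :
    zmultiples (g : G) = H ↔ ∀ y, y ∈ zmultiples g := by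
  rw [← eq_top_iff', ← (map_injective H.subtype_injective).eq_iff, AddMonoidHom.map_zmultiples,
    ← AddMonoidHom.range_eq_map, range_subtype, coe_subtype]

theorem Hmg.mem_one_iff {f : G → A} :
    f ∈ Hmg 1 G A ↔ ∀ (x : G) (n : ℤ), IsCoprime n (addOrderOf x : ℤ) → f (n • x) = n • f x := by
  show (∀ (x : G) (n : ℤ), _ → f (n • x) = n ^ 1 • f x) ↔ _
  simp only [pow_one]

theorem Hmg.addOrderOf_dvd {f : G → A} (hf : f ∈ Hmg 1 G A) (x : G) :
    addOrderOf (f x) ∣ addOrderOf x := by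
  have h := Hmg.mem_one_iff.mp hf x (addOrderOf x + 1) ⟨1, -1, by ring⟩
  rw [add_zsmul, natCast_zsmul, addOrderOf_nsmul_eq_zero, zero_add, one_zsmul, add_zsmul,
    one_zsmul, natCast_zsmul] at h
  exact addOrderOf_dvd_of_nsmul_eq_zero (add_eq_right.mp h.symm)

theorem Hmg.exists_addMonoidHom_apply_eq {f : G → A} (hf : f ∈ Hmg 1 G A) (C : AddSubgroup G)
    [IsAddCyclic C] : ∃ ψ : C →+ A, ∀ y : C, zmultiples (y : G) = C → ψ y = f y := by
  obtain ⟨g, hg⟩ := IsAddCyclic.exists_generator (α := C)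
  have hdvd : addOrderOf (f g) ∣ addOrderOf g := addOrderOf_coe g ▸ Hmg.addOrderOf_dvd hf g
  refine ⟨addMonoidHomOfForallMemZMultiples hg hdvd, fun y hy => ?_⟩
  obtain ⟨k, rfl⟩ := mem_zmultiples_iff.mp (hg y)
  have hk : IsCoprime k (addOrderOf (g : G)) := by
    rw [← zmultiples_zsmul_eq_iff_isCoprime, ← coe_zsmul, hy, (zmultiples_coe_eq_iff g).mpr hg]
  rw [map_zsmul, addMonoidHomOfForallMemZMultiples_apply_gen, coe_zsmul,
    Hmg.mem_one_iff.mp hf _ _ hk]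

def evalAtGenerators (φ : ∀ C : {C : AddSubgroup G // IsAddCyclic C}, C.1 →+ A) (x : G) : A :=
  φ ⟨zmultiples x, inferInstance⟩ ⟨x, mem_zmultiples x⟩

theorem apply_eq_evalAtGenerators (φ : ∀ C : {C : AddSubgroup G // IsAddCyclic C}, C.1 →+ A)
    {C : {C : AddSubgroup G // IsAddCyclic C}} (y : C.1) (hy : zmultiples (y : G) = C.1) :
    φ C y = evalAtGenerators φ y := by
  obtain ⟨C, hC⟩ := C
  obtain ⟨y, hyC⟩ := y
  change zmultiples y = C at hy
  subst hy
  rfl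

theorem evalAtGenerators_mem_hmg (φ : ∀ C : {C : AddSubgroup G // IsAddCyclic C}, C.1 →+ A) :
    evalAtGenerators φ ∈ Hmg 1 G A := by
  refine Hmg.mem_one_iff.mpr fun x n hn => ?_
  let C : {C : AddSubgroup G // IsAddCyclic C} := ⟨zmultiples x, inferInstance⟩
  calc evalAtGenerators φ (n • x) = φ C ⟨n • x, zsmul_mem (mem_zmultiples x) n⟩ :=
        (apply_eq_evalAtGenerators φ (C := C) ⟨n • x, _⟩
          (zmultiples_zsmul_eq_iff_isCoprime.mpr hn)).symm
    _ = n • evalAtGenerators φ x := map_zsmul (φ C) n ⟨x, mem_zmultiples x⟩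

variable (G A) in
def Hmg.ofCyclicHoms : (∀ C : {C : AddSubgroup G // IsAddCyclic C}, C.1 →+ A) →+ Hmg 1 G A where
  toFun φ := ⟨evalAtGenerators φ, evalAtGenerators_mem_hmg φ⟩
  map_zero' := rfl
  map_add' _ _ := rfl

theorem Hmg.ofCyclicHoms_bijective : Function.Bijective (Hmg.ofCyclicHoms G A) := by
  constructor
  · intro φ φ' h
    funext C
    obtain ⟨g, hg⟩ := C.2.exists_generator
    have hgen := (zmultiples_coe_eq_iff g).mpr hg
    rw [AddMonoidHom.eq_iff_eq_on_generator hg, apply_eq_evalAtGenerators φ g hgen,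
      apply_eq_evalAtGenerators φ' g hgen]
    exact congrFun (congrArg Subtype.val h) g
  · rintro ⟨f, hf⟩
    choose ψ hψ using fun C : {C : AddSubgroup G // IsAddCyclic C} =>
      have := C.2; Hmg.exists_addMonoidHom_apply_eq hf C.1
    exact ⟨ψ, Subtype.ext <| funext fun x => hψ _ ⟨x, mem_zmultiples x⟩ rfl⟩

end

theorem stmt17 (G : Type*) [AddCommGroup G] [Finite G] :
    Nonempty ((Hmg 1 G QZ) ≃+
      ⨁ C : {C : AddSubgroup G // IsAddCyclic C}, (C.1 →+ QZ)) := by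
  have : Fintype {C : AddSubgroup G // IsAddCyclic C} := Fintype.ofFinite _
  exact ⟨(AddEquiv.ofBijective _ Hmg.ofCyclicHoms_bijective).symm.trans
    (DirectSum.linearEquivFunOnFintype ℤ _ _).toAddEquiv.symm⟩

end
end
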